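/- arXiv:1202.6095 — 3 statements merged into one kernel-verified Lean document; each statement's English description precedes it below -/
import Mathlib

section
/- Fix an integer t ≥ 2. For every sequence of integers (i_n) indexed by n with t+2 ≤ i_n ≤ n−t−2 and i_n + t even for each n, the even-weight-subcode miscorrection probability satisfies lim_{n→∞} n·Q̃_n(i_n) = 1/(t−1)!, i.e., Q̃_n(i) = (1/((t−1)!·n))·(1+o(1)) when i+t is even. -/
open Finset Filter

/-- `ℓ(i,δ,j) = i − δ + 2j + 1` (natural subtraction; the defining ranges guarantee
`i ≥ δ` wherever this is used). -/
def ell (i δ j : ℕ) : ℕ := i - δ + 2 * j + 1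

/-- `V(n,i,δ,j) = C(ℓ, ℓ−j)·C(n−ℓ−1, δ−1−j)/C(n−1,i)`. -/
noncomputable def V (n i δ j : ℕ) : ℝ :=
  (Nat.choose (ell i δ j) (ell i δ j - j) : ℝ) *
    (Nat.choose (n - ell i δ j - 1) (δ - 1 - j) : ℝ) / (Nat.choose (n - 1) i : ℝ)

/-- Binomial approximation `Â_l = (n+1)^{−t}·C(n,l)`. -/
noncomputable def Ahat (t n l : ℕ) : ℝ :=
  ((n : ℝ) + 1) ^ (-(t : ℤ)) * (Nat.choose n l : ℝ)

/-- Approximate weight distribution of the even-weight subcode: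
`Ã_l = (n+1)^{−t}·C(n,l)` for even `l`, and `Ã_l = 0` for odd `l`. -/
noncomputable def Atil (t n l : ℕ) : ℝ :=
  if l % 2 = 0 then Ahat t n l else 0

/-- `Q̃_n(i)`: probability that a bit decoded by bounded-distance decoding of the
even-weight subcode becomes erroneous given it was initially correct and `i` of
the other `n−1` positions are in error. -/
noncomputable def Qtil (t n i : ℕ) : ℝ :=
  if i ≤ t + 1 then 0
  else
    ∑ δ ∈ Icc 1 t, ∑ j ∈ range δ,
      (((ell i δ j : ℝ) + 1) / (n : ℝ)) * Atil t n (ell i δ j + 1) * V n i δ j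

open Nat Polynomial

/-! When `ℓ + 1` is even, i.e. `δ ≡ i (mod 2)`, the identity `(ℓ + 1)·C(n, ℓ + 1) = n·C(n − 1, ℓ)`
and a symmetry of products of three binomial coefficients collapse the `(δ, j)` summand of
`Q̃_n(i)` to `(n + 1)^{-t}·C(n − 1 − i, j)·C(i, δ − 1 − j)`; Vandermonde's identity then sums
it over `j` to `(n + 1)^{-t}·C(n − 1, δ − 1)`. So for `i ≡ t` the quantity `n·Q̃_n(i)` is a
sum over `δ ≤ t`, `δ ≡ t`, of `n·C(n − 1, δ − 1)/(n + 1)^t`, a quotient of polynomials in `n`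
of degrees `δ` and `t` with leading coefficients `1/(δ − 1)!` and `1`: only `δ = t`
contributes to the limit, and it contributes `1/(t − 1)!`. -/

theorem Nat.choose_mul_choose_mul_choose_comm (a b j r : ℕ) :
    (a + b + j + r).choose (b + j) * (b + j).choose b * (a + r).choose a =
      (a + b + j + r).choose (a + b) * (a + b).choose a * (j + r).choose j := by
  -- both sides are the multinomial coefficient `(a + b + j + r)! / (a! b! j! r!)`
  have factor {m k : ℕ} (h : k ≤ m) (d : ℕ) (hd : m - k = d) : m.choose k * k ! * d ! = m ! :=
    hd ▸ choose_mul_factorial_mul_factorial h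
  have hbj := factor (Nat.le_add_right b j) j (by omega)
  have har := factor (Nat.le_add_right a r) r (by omega)
  have hab := factor (Nat.le_add_right a b) b (by omega)
  have hjr := factor (Nat.le_add_right j r) r (by omega)
  have hN₁ := factor (by omega : b + j ≤ a + b + j + r) (a + r) (by omega)
  have hN₂ := factor (by omega : a + b ≤ a + b + j + r) (j + r) (by omega)
  apply Nat.mul_right_cancel (by positivity : 0 < a ! * b ! * j ! * r !)
  zify at hbj har hab hjr hN₁ hN₂ ⊢
  linear_combination
    ((a + b + j + r).choose (b + j) * (a + r).choose a * a ! * r ! : ℤ) * hbj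
    + ((a + b + j + r).choose (b + j) * (b + j) ! : ℤ) * har + hN₁
    - ((a + b + j + r).choose (a + b) * (j + r).choose j * j ! * r ! : ℤ) * hab
    - ((a + b + j + r).choose (a + b) * (a + b) ! : ℤ) * hjr - hN₂

theorem Nat.sum_range_choose_mul_choose (m n k : ℕ) :
    ∑ j ∈ range (k + 1), m.choose j * n.choose (k - j) = (m + n).choose k := by
  rw [add_choose_eq, Finset.Nat.sum_antidiagonal_eq_sum_range_succ_mk]

theorem ell_succ_div_mul_Ahat_mul_V_eq {t n i δ j : ℕ} (hj : j < δ) (hδi : δ ≤ i)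
    (hin : i + δ ≤ n) :
    ((ell i δ j : ℝ) + 1) / n * Ahat t n (ell i δ j + 1) * V n i δ j =
      ((n : ℝ) + 1) ^ (-(t : ℤ)) * ((n - 1 - i).choose j * i.choose (δ - 1 - j)) := by
  obtain ⟨a, b, r, rfl, rfl, rfl⟩ :
      ∃ a b r, i = a + b ∧ δ = a + j + 1 ∧ n = a + b + j + r + 1 :=
    ⟨δ - 1 - j, i - (δ - 1 - j), n - i - j - 1, by omega, by omega, by omega⟩
  have hell : ell (a + b) (a + j + 1) j = b + j := by unfold ell; omega
  rw [Ahat, V, hell, show b + j - j = b by omega,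
    show a + b + j + r + 1 - (b + j) - 1 = a + r by omega, show a + j + 1 - 1 - j = a by omega,
    show a + b + j + r + 1 - 1 - (a + b) = j + r by omega,
    show a + b + j + r + 1 - 1 = a + b + j + r by omega]
  have hpascal := Nat.add_one_mul_choose_eq (a + b + j + r) (b + j)
  have hmult := Nat.choose_mul_choose_mul_choose_comm a b j r
  have hC : ((a + b + j + r).choose (a + b) : ℝ) ≠ 0 := by
    exact_mod_cast (Nat.choose_pos (by omega)).ne'
  rify at hpascal hmult
  field_simp
  push_cast at hpascal hmult ⊢
  linear_combination (a + b + j + r + 1 : ℝ) * hmult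
    - ((b + j).choose b * (a + r).choose a : ℝ) * hpascal

theorem Qtil_eq_sum_choose {t n i : ℕ} (hi : t + 2 ≤ i) (hin : i + t ≤ n) :
    Qtil t n i = ((n : ℝ) + 1) ^ (-(t : ℤ)) *
      ∑ δ ∈ (Icc 1 t).filter (fun δ => δ % 2 = i % 2), ((n - 1).choose (δ - 1) : ℝ) := by
  rw [Qtil, if_neg (by omega), sum_filter, mul_sum]
  refine sum_congr rfl fun δ hδ => ?_
  rw [mem_Icc] at hδ
  obtain ⟨k, rfl⟩ : ∃ k, δ = k + 1 := ⟨δ - 1, by omega⟩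
  simp only [Nat.add_sub_cancel]
  split_ifs with hpar
  · calc _ = ∑ j ∈ range (k + 1), ((n : ℝ) + 1) ^ (-(t : ℤ)) *
            ((n - 1 - i).choose j * i.choose (k - j)) :=
          sum_congr rfl fun j hj => by
            rw [Atil.eq_1, if_pos (by unfold ell; omega),
              ell_succ_div_mul_Ahat_mul_V_eq (mem_range.1 hj) (by omega) (by omega),
              Nat.add_sub_cancel]
      _ = _ := by
        rw [← mul_sum]
        norm_cast
        rw [Nat.sum_range_choose_mul_choose, Nat.sub_add_cancel (by omega)]
  · rw [mul_zero]
    refine sum_eq_zero fun j _ => ?_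
    rw [Atil.eq_1, if_neg (by unfold ell; omega), mul_zero, zero_mul]

theorem tendsto_descFactorial_div_pow {m t : ℕ} (hm : m ≤ t) :
    Tendsto (fun n : ℕ => (n.descFactorial m : ℝ) / ((n : ℝ) + 1) ^ t) atTop
      (nhds (if m = t then 1 else 0)) := by
  have hP : (descPochhammer ℝ m).degree = m := by
    rw [degree_eq_natDegree (monic_descPochhammer ℝ m).ne_zero, descPochhammer_natDegree]
  have hQ : ((X + C 1 : ℝ[X]) ^ t).degree = t := by
    rw [degree_pow, degree_X_add_C, nsmul_one]
  have hpoly : Tendsto (fun x : ℝ => (descPochhammer ℝ m).eval x / ((X + C 1 : ℝ[X]) ^ t).eval x)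
      atTop (nhds (if m = t then 1 else 0)) := by
    split_ifs with h
    · subst h
      have := div_tendsto_atTop_leadingCoeff_div_of_degree_eq _ _ (hP.trans hQ.symm)
      rwa [(monic_descPochhammer ℝ m).leadingCoeff, ((monic_X_add_C 1).pow m).leadingCoeff,
        div_one] at this
    · exact div_tendsto_atTop_zero_of_degree_lt _ _
        (by rw [hP, hQ]; exact_mod_cast lt_of_le_of_ne hm h)
  refine (hpoly.comp tendsto_natCast_atTop_atTop).congr fun n => ?_
  simp [descPochhammer_eval_eq_descFactorial]

theorem tendsto_mul_choose_div_pow {t δ : ℕ} (hδ : 1 ≤ δ) (hδt : δ ≤ t) :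
    Tendsto (fun n : ℕ => (n : ℝ) * (((n : ℝ) + 1) ^ (-(t : ℤ)) * ((n - 1).choose (δ - 1) : ℝ)))
      atTop (nhds (if δ = t then ((δ - 1)! : ℝ)⁻¹ else 0)) := by
  obtain ⟨k, rfl⟩ : ∃ k, δ = k + 1 := ⟨δ - 1, by omega⟩
  have := (tendsto_descFactorial_div_pow hδt).const_mul ((k ! : ℝ)⁻¹)
  rw [mul_ite, mul_one, mul_zero] at this
  refine this.congr fun n => ?_
  rw [Nat.add_sub_cancel, zpow_neg, zpow_natCast]
  rcases n with _ | m
  · simp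
  · rw [succ_descFactorial_succ, descFactorial_eq_factorial_mul_choose, Nat.add_sub_cancel]
    push_cast
    field_simp

/-- for `t ≥ 2` and any sequence `i_n` with `t+2 ≤ i_n ≤ n−t−2` and
`i_n + t` even, `lim_{n→∞} n·Q̃_n(i_n) = 1/(t−1)!`. -/
theorem stmt4 (t : ℕ) (ht : 2 ≤ t) (i : ℕ → ℕ)
    (hi : ∀ n, 4 * t + 4 < n → t + 2 ≤ i n ∧ i n ≤ n - t - 2)
    (heven : ∀ n, 4 * t + 4 < n → Even (i n + t)) :
    Tendsto (fun n : ℕ => (n : ℝ) * Qtil t n (i n)) atTop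
      (nhds (1 / (Nat.factorial (t - 1) : ℝ))) := by
  set S := (Icc 1 t).filter (fun δ => δ % 2 = t % 2)
  have hlim : Tendsto (fun n : ℕ => (n : ℝ) * (((n : ℝ) + 1) ^ (-(t : ℤ)) *
      ∑ δ ∈ S, ((n - 1).choose (δ - 1) : ℝ))) atTop (nhds (1 / (t - 1)! : ℝ)) := by
    simp_rw [mul_sum]
    convert tendsto_finsetSum S fun δ hδ => by
      obtain ⟨hδ₁, hδt⟩ := mem_Icc.1 (mem_filter.1 hδ).1
      exact tendsto_mul_choose_div_pow hδ₁ hδt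
    rw [sum_ite_eq' S t, if_pos (by simp [S]; omega), one_div]
  refine hlim.congr' ?_
  filter_upwards [eventually_gt_atTop (4 * t + 4)] with n hn
  obtain ⟨hi₁, hi₂⟩ := hi n hn
  have hpar : i n % 2 = t % 2 := by obtain ⟨r, hr⟩ := heven n hn; omega
  rw [Qtil_eq_sum_choose hi₁ (by omega), hpar]
end

section
/- Fix an odd integer t ≥ 3 and reals λ ≥ 0, ρ ≥ 0. Then the scaled density-evolution update for the even-weight subcode converges: lim_{n→∞} (n−1)·f̃_n(λ/(n−1); ρ/(n−1)) = ρ·φ(λ;t−1) + (1/(t−1)!)·χ(λ;t), where the limit is over n large enough that λ/(n−1) and ρ/(n−1) lie in [0,1]. -/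
/-!
Multiplied by `n - 1`, the density-evolution sum becomes
`∑ i, bₙ(i) * (ρ * P̃ₙ(i) + (n - 1 - ρ) * Q̃ₙ(i))`, where `bₙ` is the `Bin(n - 1, λ/(n - 1))`
weight; by the Poisson limit theorem `bₙ(i)` tends to the Poisson weight of `i`.

Cancelling `C(n-1, i)` against the denominator of `V` shows
`bₙ(i) * Â_{ℓ+e} * V ≤ (2λ)^i / (i - t)! * n^(j+e) / (n + 1)^t`.
With `e = 0` and `j < t` this makes the correction in `P̃ₙ(i)` vanish, so `P̃ₙ(i) → [t ≤ i]`.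
With `e = 1` it shows that in `(n - 1 - ρ) * Q̃ₙ(i)` only the term `δ = t`, `j = t - 1` survives;
when `i + t` is even (`i` odd) that term equals `(n - 1 - ρ) * C(n - 1 - i, t - 1) / (n + 1)^t`,
which tends to `1 / (t - 1)!`. The same estimates give the summable majorant
`const * (4λ)^i / (i - t)!`, so Tannery's theorem lets the limit pass through the sum.
-/

open Finset Filter

/-- `P̃_n(i)`. -/
noncomputable def Ptil (t n i : ℕ) : ℝ :=
  if i < t then 0
  else if i ≤ n - t - 2 then
    1 - ∑ δ ∈ Icc 1 t, ∑ j ∈ range δ,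
      (((n : ℝ) - (ell i δ j : ℝ)) / (n : ℝ)) * Atil t n (ell i δ j) * V n i δ j
  else 1

/-- Density-evolution map for the even-weight subcode:
`f̃_n(x;p) = ∑_{i=0}^{n−1} C(n−1,i)·x^i·(1−x)^{n−1−i}·(p·P̃_n(i) + (1−p)·Q̃_n(i))`. -/
noncomputable def fDEtil (t n : ℕ) (x p : ℝ) : ℝ :=
  ∑ i ∈ range n, (Nat.choose (n - 1) i : ℝ) * x ^ i * (1 - x) ^ (n - 1 - i) *
    (p * Ptil t n i + (1 - p) * Qtil t n i)

/-- Poisson tail probability `φ(λ;k) = ∑_{i=k+1}^∞ (λ^i/i!)·e^{−λ}`. -/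
noncomputable def phi (lam : ℝ) (k : ℕ) : ℝ :=
  ∑' i : ℕ, if k + 1 ≤ i then lam ^ i / (Nat.factorial i : ℝ) * Real.exp (-lam) else 0

/-- Poisson tail probability restricted to odd indices:
`χ(λ;k) = ∑_{i>k, i odd} (λ^i/i!)·e^{−λ}`. -/
noncomputable def chi (lam : ℝ) (k : ℕ) : ℝ :=
  ∑' i : ℕ, if k + 1 ≤ i ∧ Odd i then lam ^ i / (Nat.factorial i : ℝ) * Real.exp (-lam) else 0

open Topology

noncomputable def binomWeight (n : ℕ) (lam : ℝ) (i : ℕ) : ℝ :=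
  ((n - 1).choose i : ℝ) * (lam / ((n : ℝ) - 1)) ^ i * (1 - lam / ((n : ℝ) - 1)) ^ (n - 1 - i)

noncomputable def poissonWeight (lam : ℝ) (i : ℕ) : ℝ :=
  lam ^ i / (i.factorial : ℝ) * Real.exp (-lam)

noncomputable def tailMajorant (t : ℕ) (c : ℝ) (i : ℕ) : ℝ :=
  c ^ i / ((i - t).factorial : ℝ)

noncomputable def ptilTerm (t n i δ j : ℕ) : ℝ :=
  (((n : ℝ) - (ell i δ j : ℝ)) / (n : ℝ)) * Atil t n (ell i δ j) * V n i δ j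

noncomputable def qtilTerm (t n i δ j : ℕ) : ℝ :=
  (((ell i δ j : ℝ) + 1) / (n : ℝ)) * Atil t n (ell i δ j + 1) * V n i δ j

noncomputable def scaledSummand (t : ℕ) (lam ρ : ℝ) (n i : ℕ) : ℝ :=
  binomWeight n lam i * (ρ * Ptil t n i + ((n : ℝ) - 1 - ρ) * Qtil t n i)

lemma Ahat_nonneg (t n l : ℕ) : 0 ≤ Ahat t n l := by
  unfold Ahat; positivity

lemma Atil_nonneg (t n l : ℕ) : 0 ≤ Atil t n l := by
  unfold Atil; split_ifs <;> simp [Ahat_nonneg]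

lemma Atil_le_Ahat (t n l : ℕ) : Atil t n l ≤ Ahat t n l := by
  unfold Atil; split_ifs <;> simp [Ahat_nonneg]

lemma V_nonneg (n i δ j : ℕ) : 0 ≤ V n i δ j := by
  unfold V; positivity

lemma ell_add_one_le {i δ j : ℕ} (hj : j < δ) (hδi : δ ≤ i) : ell i δ j + 1 ≤ i + δ := by
  unfold ell; omega

lemma ptilTerm_nonneg {t n i δ j : ℕ} (hl : ell i δ j ≤ n) : 0 ≤ ptilTerm t n i δ j := by
  have hl' : (ell i δ j : ℝ) ≤ n := by exact_mod_cast hl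
  have := sub_nonneg.mpr hl'
  have := Atil_nonneg t n (ell i δ j)
  have := V_nonneg n i δ j
  unfold ptilTerm; positivity

lemma ptilTerm_le (t : ℕ) {n : ℕ} (hn : 0 < n) (i δ j : ℕ) :
    ptilTerm t n i δ j ≤ Ahat t n (ell i δ j) * V n i δ j := by
  have hfrac : ((n : ℝ) - ell i δ j) / n ≤ 1 :=
    (div_le_one (by exact_mod_cast hn)).mpr (sub_le_self _ (Nat.cast_nonneg _))
  unfold ptilTerm
  gcongr
  · exact V_nonneg n i δ j
  · exact (mul_le_of_le_one_left (Atil_nonneg _ _ _) hfrac).trans (Atil_le_Ahat _ _ _)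

lemma Ptil_eq_one_sub_sum {t n i : ℕ} (hti : t ≤ i) (hin : i ≤ n - t - 2) :
    Ptil t n i = 1 - ∑ δ ∈ Icc 1 t, ∑ j ∈ range δ, ptilTerm t n i δ j := by
  simp [Ptil, ptilTerm, hin, not_lt.mpr hti]

lemma Qtil_eq_sum {t n i : ℕ} (hti : t + 1 < i) :
    Qtil t n i = ∑ δ ∈ Icc 1 t, ∑ j ∈ range δ, qtilTerm t n i δ j := by
  simp [Qtil, qtilTerm, not_le.mpr hti]

lemma sum_Icc_sum_range_le {t : ℕ} {f : ℕ → ℕ → ℝ} {b : ℝ} (hb : 0 ≤ b)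
    (h : ∀ δ ∈ Icc 1 t, ∀ j ∈ range δ, f δ j ≤ b) :
    ∑ δ ∈ Icc 1 t, ∑ j ∈ range δ, f δ j ≤ t ^ 2 * b := by
  calc ∑ δ ∈ Icc 1 t, ∑ j ∈ range δ, f δ j ≤ ∑ _δ ∈ Icc 1 t, t * b := by
        refine sum_le_sum fun δ hδ => (sum_le_card_nsmul _ _ _ (h δ hδ)).trans ?_
        rw [card_range, nsmul_eq_mul]
        exact mul_le_mul_of_nonneg_right (by exact_mod_cast (mem_Icc.mp hδ).2) hb
    _ = t ^ 2 * b := by rw [sum_const, Nat.card_Icc, Nat.add_sub_cancel, nsmul_eq_mul]; ring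

lemma sum_Icc_sum_range_eq_single {t : ℕ} (ht : 0 < t) {f : ℕ → ℕ → ℝ}
    (h : ∀ δ ∈ Icc 1 t, ∀ j ∈ range δ, (δ, j) ≠ (t, t - 1) → f δ j = 0) :
    ∑ δ ∈ Icc 1 t, ∑ j ∈ range δ, f δ j = f t (t - 1) := by
  have htmem : t ∈ Icc 1 t := mem_Icc.mpr ⟨ht, le_rfl⟩
  rw [sum_eq_single_of_mem t htmem, sum_eq_single_of_mem (t - 1) (mem_range.mpr (by omega))]
  · intro j hj hne
    exact h t htmem j hj (by simpa using hne)
  · intro δ hδ hne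
    exact sum_eq_zero fun j hj => h δ hδ j hj (by simp [hne])

lemma pow_div_add_one_pow_le {x : ℝ} (hx : 1 ≤ x) {j k t : ℕ} (h : j + k ≤ t) :
    x ^ j / (x + 1) ^ t ≤ 1 / x ^ k := by
  rw [div_le_div_iff₀ (by positivity) (by positivity), one_mul, ← pow_add]
  calc x ^ (j + k) ≤ x ^ t := pow_le_pow_right₀ hx h
    _ ≤ (x + 1) ^ t := by gcongr; linarith

lemma summable_tailMajorant (t : ℕ) (c : ℝ) : Summable (tailMajorant t c) := by
  rw [← summable_nat_add_iff t]
  simpa [tailMajorant, pow_add, mul_div_assoc, mul_comm] using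
    (Real.summable_pow_div_factorial c).mul_left (c ^ t)

lemma tailMajorant_nonneg {c : ℝ} (hc : 0 ≤ c) (t i : ℕ) : 0 ≤ tailMajorant t c i := by
  unfold tailMajorant; positivity

lemma tailMajorant_le_of_le {c d : ℝ} (hc : 0 ≤ c) (hcd : c ≤ d) (t i : ℕ) :
    tailMajorant t c i ≤ tailMajorant t d i := by
  unfold tailMajorant; gcongr

lemma pow_div_factorial_le_tailMajorant {c : ℝ} (hc : 0 ≤ c) (t i : ℕ) :
    c ^ i / (i.factorial : ℝ) ≤ tailMajorant t c i := by
  unfold tailMajorant; gcongr; exact Nat.sub_le i t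

lemma add_mul_tailMajorant_le {c : ℝ} (hc : 0 ≤ c) (t i : ℕ) :
    ((i : ℝ) + t) * tailMajorant t c i ≤ ((t : ℝ) + 1) * tailMajorant t (2 * c) i := by
  have hi : (i : ℝ) + t ≤ ((t : ℝ) + 1) * 2 ^ i := by
    have h1 : (i : ℝ) ≤ 2 ^ i := by exact_mod_cast (Nat.lt_two_pow_self).le
    have h2 : (1 : ℝ) ≤ 2 ^ i := one_le_pow₀ one_le_two
    nlinarith [(t.cast_nonneg : (0 : ℝ) ≤ t)]
  calc ((i : ℝ) + t) * tailMajorant t c i ≤ ((t : ℝ) + 1) * 2 ^ i * tailMajorant t c i :=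
        mul_le_mul_of_nonneg_right hi (tailMajorant_nonneg hc t i)
    _ = ((t : ℝ) + 1) * tailMajorant t (2 * c) i := by
        unfold tailMajorant; rw [mul_pow]; ring

lemma choose_ell_mul_le {t i δ j : ℕ} (hj : j < δ) (hδi : δ ≤ i) (hδt : δ ≤ t) (n e : ℕ) :
    n.choose (ell i δ j + e) * (ell i δ j).choose (ell i δ j - j) *
      (n - ell i δ j - 1).choose (δ - 1 - j) * (i - t).factorial ≤ n ^ (i + j + e) := by
  set l := ell i δ j with hl
  have hfac : (i - t).factorial ≤ (l - j).factorial :=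
    Nat.factorial_le (by simp only [hl, ell]; omega)
  have hcl : l.choose (l - j) * (l - j).factorial ≤ (l + e).factorial := by
    calc l.choose (l - j) * (l - j).factorial
        ≤ l.choose (l - j) * (l - j).factorial * (l - (l - j)).factorial :=
          Nat.le_mul_of_pos_right _ (Nat.factorial_pos _)
      _ = l.factorial := Nat.choose_mul_factorial_mul_factorial (Nat.sub_le l j)
      _ ≤ (l + e).factorial := Nat.factorial_le (Nat.le_add_right l e)
  have hcn : n.choose (l + e) * (l + e).factorial ≤ n ^ (l + e) := by
    rw [mul_comm, ← Nat.descFactorial_eq_factorial_mul_choose]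
    exact Nat.descFactorial_le_pow n _
  have hcd : (n - l - 1).choose (δ - 1 - j) ≤ n ^ (δ - 1 - j) :=
    (Nat.choose_le_pow _ _).trans (Nat.pow_le_pow_left (by omega) _)
  calc n.choose (l + e) * l.choose (l - j) * (n - l - 1).choose (δ - 1 - j) * (i - t).factorial
      ≤ n.choose (l + e) * l.choose (l - j) * (n - l - 1).choose (δ - 1 - j) *
          (l - j).factorial := Nat.mul_le_mul_left _ hfac
    _ = n.choose (l + e) * (l.choose (l - j) * (l - j).factorial) *
          (n - l - 1).choose (δ - 1 - j) := by ring
    _ ≤ n.choose (l + e) * (l + e).factorial * n ^ (δ - 1 - j) :=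
        Nat.mul_le_mul (Nat.mul_le_mul_left _ hcl) hcd
    _ ≤ n ^ (l + e) * n ^ (δ - 1 - j) := Nat.mul_le_mul_right _ hcn
    _ = n ^ (i + j + e) := by rw [← pow_add]; congr 1; simp only [hl, ell]; omega

section Bounds

variable {t n i : ℕ} {lam ρ : ℝ}

lemma div_sub_one_mem_Icc (hn : 2 ≤ n) (hlam : 0 ≤ lam) (hlamn : lam ≤ (n : ℝ) - 1) :
    lam / ((n : ℝ) - 1) ∈ Set.Icc 0 1 := by
  have : (1 : ℝ) < n := by exact_mod_cast hn
  exact ⟨by positivity, div_le_one_of_le₀ hlamn (by linarith)⟩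

lemma binomWeight_nonneg (hn : 2 ≤ n) (hlam : 0 ≤ lam) (hlamn : lam ≤ (n : ℝ) - 1) (i : ℕ) :
    0 ≤ binomWeight n lam i := by
  obtain ⟨hx0, hx1⟩ := div_sub_one_mem_Icc hn hlam hlamn
  have := sub_nonneg.mpr hx1
  unfold binomWeight; positivity

lemma binomWeight_le (hn : 2 ≤ n) (hlam : 0 ≤ lam) (hlamn : lam ≤ (n : ℝ) - 1) (i : ℕ) :
    binomWeight n lam i ≤ lam ^ i / (i.factorial : ℝ) := by
  obtain ⟨hx0, hx1⟩ := div_sub_one_mem_Icc hn hlam hlamn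
  have hn1 : ((n - 1 : ℕ) : ℝ) = (n : ℝ) - 1 := by rw [Nat.cast_sub (by omega), Nat.cast_one]
  have hpos : (0 : ℝ) < (n : ℝ) - 1 := by rw [← hn1]; exact_mod_cast (by omega : 0 < n - 1)
  calc binomWeight n lam i
      ≤ ((n : ℝ) - 1) ^ i / (i.factorial : ℝ) * (lam / ((n : ℝ) - 1)) ^ i * 1 := by
        unfold binomWeight
        gcongr
        · exact hn1 ▸ Nat.choose_le_pow_div i (n - 1)
        · exact pow_le_one₀ (sub_nonneg.mpr hx1) (by linarith)
    _ = lam ^ i / (i.factorial : ℝ) := by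
        rw [mul_one, div_mul_eq_mul_div, ← mul_pow, mul_div_cancel₀ _ hpos.ne']

lemma binomWeight_mul_V_le (hn : 2 ≤ n) (hlam : 0 ≤ lam) (hlamn : lam ≤ (n : ℝ) - 1)
    (i δ j : ℕ) :
    binomWeight n lam i * V n i δ j ≤ (lam / ((n : ℝ) - 1)) ^ i *
      ((ell i δ j).choose (ell i δ j - j) * (n - ell i δ j - 1).choose (δ - 1 - j) : ℕ) := by
  obtain ⟨hx0, hx1⟩ := div_sub_one_mem_Icc hn hlam hlamn
  set C : ℝ := ((n - 1).choose i : ℝ)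
  set x := lam / ((n : ℝ) - 1)
  set A : ℝ :=
    (((ell i δ j).choose (ell i δ j - j) * (n - ell i δ j - 1).choose (δ - 1 - j) : ℕ) : ℝ)
  have hk : (1 - x) ^ (n - 1 - i) ≤ 1 := pow_le_one₀ (sub_nonneg.mpr hx1) (by linarith)
  -- `C` vanishes for `i ≥ n`, and then `A / C = 0`
  have hCA : C * (A / C) ≤ A := by
    rcases eq_or_ne C 0 with hC | hC
    · rw [hC, zero_mul]; positivity
    · rw [mul_div_cancel₀ _ hC]
  calc binomWeight n lam i * V n i δ j = x ^ i * (1 - x) ^ (n - 1 - i) * (C * (A / C)) := by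
        simp only [binomWeight, V, A, C, x, Nat.cast_mul]; ring
    _ ≤ x ^ i * 1 * A := by gcongr
    _ = x ^ i * A := by rw [mul_one]

lemma binomWeight_mul_Ahat_mul_V_le {δ j : ℕ} (hn : 2 ≤ n) (hlam : 0 ≤ lam)
    (hlamn : lam ≤ (n : ℝ) - 1) (hj : j < δ) (hδi : δ ≤ i) (hδt : δ ≤ t) (e : ℕ) :
    binomWeight n lam i * (Ahat t n (ell i δ j + e) * V n i δ j) ≤
      tailMajorant t (2 * lam) i * ((n : ℝ) ^ (j + e) / ((n : ℝ) + 1) ^ t) := by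
  obtain ⟨hx0, -⟩ := div_sub_one_mem_Icc hn hlam hlamn
  have hn2 : (2 : ℝ) ≤ n := by exact_mod_cast hn
  have hxn : lam / ((n : ℝ) - 1) * n ≤ 2 * lam := by
    rw [div_mul_eq_mul_div, div_le_iff₀ (by linarith)]
    nlinarith
  have hchoose : ((n.choose (ell i δ j + e) : ℕ) : ℝ) *
      (((ell i δ j).choose (ell i δ j - j) * (n - ell i δ j - 1).choose (δ - 1 - j) : ℕ) : ℝ) ≤
        (n : ℝ) ^ (i + j + e) / ((i - t).factorial : ℝ) := by
    rw [le_div_iff₀ (by positivity), ← Nat.cast_mul, ← mul_assoc]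
    exact_mod_cast choose_ell_mul_le hj hδi hδt n e
  calc binomWeight n lam i * (Ahat t n (ell i δ j + e) * V n i δ j)
      = Ahat t n (ell i δ j + e) * (binomWeight n lam i * V n i δ j) := by ring
    _ ≤ Ahat t n (ell i δ j + e) * ((lam / ((n : ℝ) - 1)) ^ i *
      ((ell i δ j).choose (ell i δ j - j) * (n - ell i δ j - 1).choose (δ - 1 - j) : ℕ)) :=
        mul_le_mul_of_nonneg_left (binomWeight_mul_V_le hn hlam hlamn i δ j) (Ahat_nonneg _ _ _)
    _ = (lam / ((n : ℝ) - 1)) ^ i / ((n : ℝ) + 1) ^ t * (((n.choose (ell i δ j + e) : ℕ) : ℝ) *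
      (((ell i δ j).choose (ell i δ j - j) * (n - ell i δ j - 1).choose (δ - 1 - j) : ℕ) : ℝ)) := by
        rw [Ahat, zpow_neg, zpow_natCast]; ring
    _ ≤ (lam / ((n : ℝ) - 1)) ^ i / ((n : ℝ) + 1) ^ t *
          ((n : ℝ) ^ (i + j + e) / ((i - t).factorial : ℝ)) := by gcongr
    _ = (lam / ((n : ℝ) - 1) * n) ^ i / ((i - t).factorial : ℝ) *
          ((n : ℝ) ^ (j + e) / ((n : ℝ) + 1) ^ t) := by
        rw [mul_pow, add_assoc, pow_add]; ring
    _ ≤ tailMajorant t (2 * lam) i * ((n : ℝ) ^ (j + e) / ((n : ℝ) + 1) ^ t) := by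
        unfold tailMajorant; gcongr

lemma binomWeight_mul_ptilTerm_mem_Icc (hn : 2 ≤ n) (hlam : 0 ≤ lam)
    (hlamn : lam ≤ (n : ℝ) - 1) (hin : i + t ≤ n) {δ j : ℕ} (hj : j < δ) (hδi : δ ≤ i)
    (hδt : δ ≤ t) :
    binomWeight n lam i * ptilTerm t n i δ j ∈ Set.Icc 0 (tailMajorant t (2 * lam) i / n) := by
  have hn1 : (1 : ℝ) ≤ n := by exact_mod_cast (by omega : 1 ≤ n)
  have hb := binomWeight_nonneg hn hlam hlamn i
  refine ⟨mul_nonneg hb (ptilTerm_nonneg (by have := ell_add_one_le hj hδi; omega)), ?_⟩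
  calc binomWeight n lam i * ptilTerm t n i δ j
      ≤ binomWeight n lam i * (Ahat t n (ell i δ j) * V n i δ j) :=
        mul_le_mul_of_nonneg_left (ptilTerm_le t (by omega) i δ j) hb
    _ ≤ tailMajorant t (2 * lam) i * ((n : ℝ) ^ j / ((n : ℝ) + 1) ^ t) :=
        binomWeight_mul_Ahat_mul_V_le hn hlam hlamn hj hδi hδt 0
    _ ≤ tailMajorant t (2 * lam) i * (1 / (n : ℝ) ^ 1) :=
        mul_le_mul_of_nonneg_left (pow_div_add_one_pow_le hn1 (by omega))
          (tailMajorant_nonneg (by positivity) t i)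
    _ = tailMajorant t (2 * lam) i / n := by ring

lemma sub_mul_binomWeight_mul_qtilTerm_mem_Icc (hn : 2 ≤ n) (hlam : 0 ≤ lam)
    (hlamn : lam ≤ (n : ℝ) - 1) (hρ : 0 ≤ ρ) (hρn : ρ ≤ (n : ℝ) - 1) {δ j : ℕ} (hj : j < δ)
    (hδi : δ ≤ i) (hδt : δ ≤ t) :
    ((n : ℝ) - 1 - ρ) * (binomWeight n lam i * qtilTerm t n i δ j) ∈ Set.Icc 0
      (((i : ℝ) + t) * tailMajorant t (2 * lam) i * ((n : ℝ) ^ (j + 1) / ((n : ℝ) + 1) ^ t)) := by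
  have hn0 : (0 : ℝ) < n := by exact_mod_cast (by omega : 0 < n)
  have hρ' : 0 ≤ (n : ℝ) - 1 - ρ := by linarith
  have hcoef : ((n : ℝ) - 1 - ρ) * (((ell i δ j : ℝ) + 1) / n) ≤ (i : ℝ) + t := by
    have hl : (ell i δ j : ℝ) + 1 ≤ (i : ℝ) + t := by
      exact_mod_cast (ell_add_one_le hj hδi).trans (by omega)
    calc ((n : ℝ) - 1 - ρ) * (((ell i δ j : ℝ) + 1) / n)
        = ((n : ℝ) - 1 - ρ) / n * ((ell i δ j : ℝ) + 1) := by ring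
      _ ≤ (i : ℝ) + t :=
          (mul_le_of_le_one_left (by positivity) ((div_le_one hn0).mpr (by linarith))).trans hl
  have hb := binomWeight_nonneg hn hlam hlamn i
  have hA0 : 0 ≤ binomWeight n lam i * (Atil t n (ell i δ j + 1) * V n i δ j) :=
    mul_nonneg hb (mul_nonneg (Atil_nonneg _ _ _) (V_nonneg _ _ _ _))
  have hA : binomWeight n lam i * (Atil t n (ell i δ j + 1) * V n i δ j) ≤
      binomWeight n lam i * (Ahat t n (ell i δ j + 1) * V n i δ j) := by
    gcongr
    · exact V_nonneg _ _ _ _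
    · exact Atil_le_Ahat _ _ _
  have hsplit : ((n : ℝ) - 1 - ρ) * (binomWeight n lam i * qtilTerm t n i δ j) =
      ((n : ℝ) - 1 - ρ) * (((ell i δ j : ℝ) + 1) / n) *
        (binomWeight n lam i * (Atil t n (ell i δ j + 1) * V n i δ j)) := by
    unfold qtilTerm; ring
  rw [hsplit]
  refine ⟨mul_nonneg (by positivity) hA0, ?_⟩
  calc ((n : ℝ) - 1 - ρ) * (((ell i δ j : ℝ) + 1) / n) *
        (binomWeight n lam i * (Atil t n (ell i δ j + 1) * V n i δ j))
      ≤ ((i : ℝ) + t) * (binomWeight n lam i * (Ahat t n (ell i δ j + 1) * V n i δ j)) :=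
        mul_le_mul hcoef hA hA0 (by positivity)
    _ ≤ ((i : ℝ) + t) * (tailMajorant t (2 * lam) i * ((n : ℝ) ^ (j + 1) / ((n : ℝ) + 1) ^ t)) :=
        mul_le_mul_of_nonneg_left (binomWeight_mul_Ahat_mul_V_le hn hlam hlamn hj hδi hδt 1)
          (by positivity)
    _ = _ := by ring

lemma binomWeight_mul_sum_ptilTerm_mem_Icc (hn : 2 ≤ n) (hlam : 0 ≤ lam)
    (hlamn : lam ≤ (n : ℝ) - 1) (hti : t ≤ i) (hin : i + t ≤ n) :
    binomWeight n lam i * ∑ δ ∈ Icc 1 t, ∑ j ∈ range δ, ptilTerm t n i δ j ∈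
      Set.Icc 0 (t ^ 2 * (tailMajorant t (2 * lam) i / n)) := by
  have hM := tailMajorant_nonneg (by positivity : 0 ≤ 2 * lam) t i
  simp only [mul_sum]
  have h : ∀ δ ∈ Icc 1 t, ∀ j ∈ range δ, _ := fun δ hδ j hj =>
    binomWeight_mul_ptilTerm_mem_Icc hn hlam hlamn hin (mem_range.mp hj)
      ((mem_Icc.mp hδ).2.trans hti) (mem_Icc.mp hδ).2
  exact ⟨sum_nonneg fun δ hδ => sum_nonneg fun j hj => (h δ hδ j hj).1,
    sum_Icc_sum_range_le (by positivity) fun δ hδ j hj => (h δ hδ j hj).2⟩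

lemma sub_mul_binomWeight_mul_Qtil_mem_Icc (hn : 2 ≤ n) (hlam : 0 ≤ lam)
    (hlamn : lam ≤ (n : ℝ) - 1) (hρ : 0 ≤ ρ) (hρn : ρ ≤ (n : ℝ) - 1) :
    ((n : ℝ) - 1 - ρ) * (binomWeight n lam i * Qtil t n i) ∈
      Set.Icc 0 (t ^ 2 * (((i : ℝ) + t) * tailMajorant t (2 * lam) i)) := by
  have hM := tailMajorant_nonneg (by positivity : 0 ≤ 2 * lam) t i
  rcases le_or_gt i (t + 1) with hi | hi
  · simp only [Qtil, if_pos hi, mul_zero, Set.left_mem_Icc]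
    positivity
  have hn1 : (1 : ℝ) ≤ n := by exact_mod_cast (by omega : 1 ≤ n)
  rw [Qtil_eq_sum hi]
  simp only [mul_sum]
  have h : ∀ δ ∈ Icc 1 t, ∀ j ∈ range δ, _ := fun δ hδ j hj =>
    sub_mul_binomWeight_mul_qtilTerm_mem_Icc hn hlam hlamn hρ hρn (mem_range.mp hj)
      ((mem_Icc.mp hδ).2.trans (by omega : t ≤ i)) (mem_Icc.mp hδ).2
  have hle : ∀ δ ∈ Icc 1 t, ∀ j ∈ range δ, ((n : ℝ) - 1 - ρ) *
      (binomWeight n lam i * qtilTerm t n i δ j) ≤ ((i : ℝ) + t) * tailMajorant t (2 * lam) i := by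
    intro δ hδ j hj
    calc _ ≤ ((i : ℝ) + t) * tailMajorant t (2 * lam) i *
          ((n : ℝ) ^ (j + 1) / ((n : ℝ) + 1) ^ t) := (h δ hδ j hj).2
      _ ≤ ((i : ℝ) + t) * tailMajorant t (2 * lam) i * (1 / (n : ℝ) ^ 0) :=
          mul_le_mul_of_nonneg_left (pow_div_add_one_pow_le hn1
            (by have := mem_range.mp hj; have := (mem_Icc.mp hδ).2; omega)) (by positivity)
      _ = ((i : ℝ) + t) * tailMajorant t (2 * lam) i := by ring
  exact ⟨sum_nonneg fun δ hδ => sum_nonneg fun j hj => (h δ hδ j hj).1,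
    sum_Icc_sum_range_le (by positivity) hle⟩

lemma abs_binomWeight_mul_Ptil_le (hn : 2 ≤ n) (hlam : 0 ≤ lam) (hlamn : lam ≤ (n : ℝ) - 1) :
    |binomWeight n lam i * Ptil t n i| ≤ (1 + t ^ 2) * tailMajorant t (2 * lam) i := by
  have hM := tailMajorant_nonneg (by positivity : 0 ≤ 2 * lam) t i
  have hb := binomWeight_nonneg hn hlam hlamn i
  have hbM : binomWeight n lam i ≤ tailMajorant t (2 * lam) i :=
    (binomWeight_le hn hlam hlamn i).trans <| (pow_div_factorial_le_tailMajorant hlam t i).trans <|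
      tailMajorant_le_of_le hlam (by linarith) t i
  rcases lt_or_ge i t with hit | hti
  · simp only [Ptil, if_pos hit, mul_zero, abs_zero]
    positivity
  rcases le_or_gt i (n - t - 2) with hin | hin
  · obtain ⟨hS0, hS⟩ := binomWeight_mul_sum_ptilTerm_mem_Icc hn hlam hlamn hti (by omega)
    have hMn : tailMajorant t (2 * lam) i / n ≤ tailMajorant t (2 * lam) i :=
      div_le_self hM (by exact_mod_cast (by omega : 1 ≤ n))
    rw [Ptil_eq_one_sub_sum hti hin, mul_one_sub]
    calc _ ≤ |binomWeight n lam i| + |binomWeight n lam i *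
          ∑ δ ∈ Icc 1 t, ∑ j ∈ range δ, ptilTerm t n i δ j| := abs_sub _ _
      _ ≤ tailMajorant t (2 * lam) i + t ^ 2 * tailMajorant t (2 * lam) i := by
          rw [abs_of_nonneg hb, abs_of_nonneg hS0]
          exact add_le_add hbM (hS.trans (mul_le_mul_of_nonneg_left hMn (by positivity)))
      _ = (1 + t ^ 2) * tailMajorant t (2 * lam) i := by ring
  · have hP : Ptil t n i = 1 := by simp [Ptil, not_lt.mpr hti, not_le.mpr hin]
    rw [hP, mul_one, abs_of_nonneg hb]
    nlinarith

lemma norm_scaledSummand_le (hlam : 0 ≤ lam) (hρ : 0 ≤ ρ) :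
    ∀ᶠ n : ℕ in atTop, ∀ i, ‖scaledSummand t lam ρ n i‖ ≤
      (ρ * (1 + t ^ 2) + t ^ 2 * (t + 1)) * tailMajorant t (4 * lam) i := by
  filter_upwards [eventually_ge_atTop 2,
    tendsto_natCast_atTop_atTop.eventually_ge_atTop (lam + ρ + 1)] with n hn hlarge i
  have hlamn : lam ≤ (n : ℝ) - 1 := by linarith
  have hρn : ρ ≤ (n : ℝ) - 1 := by linarith
  obtain ⟨hQ0, hQ⟩ := sub_mul_binomWeight_mul_Qtil_mem_Icc (t := t) (i := i) hn hlam hlamn hρ hρn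
  have hP := abs_binomWeight_mul_Ptil_le (t := t) (i := i) hn hlam hlamn
  have h24 := tailMajorant_le_of_le (by positivity) (by linarith : 2 * lam ≤ 4 * lam) t i
  have hpoly := add_mul_tailMajorant_le (by positivity : 0 ≤ 2 * lam) t i
  rw [show 2 * (2 * lam) = 4 * lam by ring] at hpoly
  calc ‖scaledSummand t lam ρ n i‖
      = |ρ * (binomWeight n lam i * Ptil t n i) +
          ((n : ℝ) - 1 - ρ) * (binomWeight n lam i * Qtil t n i)| := by
        rw [Real.norm_eq_abs, scaledSummand]; congr 1; ring
    _ ≤ ρ * |binomWeight n lam i * Ptil t n i| +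
          ((n : ℝ) - 1 - ρ) * (binomWeight n lam i * Qtil t n i) := by
        refine (abs_add_le _ _).trans ?_
        rw [abs_mul, abs_of_nonneg hρ, abs_of_nonneg hQ0]
    _ ≤ ρ * ((1 + t ^ 2) * tailMajorant t (4 * lam) i) +
          t ^ 2 * (((t : ℝ) + 1) * tailMajorant t (4 * lam) i) := by
        refine add_le_add (mul_le_mul_of_nonneg_left (hP.trans ?_) hρ) (hQ.trans ?_) <;> gcongr
    _ = _ := by ring

end Bounds

lemma tendsto_binomWeight (lam : ℝ) (i : ℕ) :
    Tendsto (fun n => binomWeight n lam i) atTop (𝓝 (poissonWeight lam i)) := by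
  have hr : Tendsto (fun m : ℕ => (m : ℝ) * (lam / m)) atTop (𝓝 lam) :=
    tendsto_const_nhds.congr' <| by
      filter_upwards [eventually_ne_atTop 0] with m hm
      field_simp
  have h := (ProbabilityTheory.tendsto_choose_mul_pow_of_tendsto_mul_atTop i hr).comp
    (tendsto_sub_atTop_nat 1)
  rw [show poissonWeight lam i = Real.exp (-lam) * lam ^ i / i.factorial by
    unfold poissonWeight; ring]
  refine h.congr' ?_
  filter_upwards [eventually_ge_atTop 1] with n hn
  simp [binomWeight, Nat.cast_sub hn]

lemma tendsto_choose_div_add_pow (k : ℕ) (a : ℝ) :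
    Tendsto (fun m : ℕ => (m.choose k : ℝ) / ((m : ℝ) + a) ^ k) atTop
      (𝓝 (1 / (k.factorial : ℝ))) := by
  have hr : Tendsto (fun m : ℕ => (m : ℝ) * (1 / ((m : ℝ) + a))) atTop (𝓝 1) := by
    simpa [div_eq_mul_inv] using tendsto_natCast_div_add_atTop a
  simpa [div_eq_mul_inv] using ProbabilityTheory.tendsto_choose_mul_pow_atTop k hr

lemma add_one_mul_choose_mul_choose (m s i : ℕ) (h : i ≤ s) :
    (s + 1) * (m + 1).choose (s + 1) * s.choose i =
      (m + 1) * m.choose i * (m - i).choose (s - i) := by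
  rw [mul_comm (s + 1), ← Nat.add_one_mul_choose_eq, mul_assoc, Nat.choose_mul h, mul_assoc]

lemma qtilTerm_top {t n i : ℕ} (ht : 0 < t) (hti : t ≤ i) (hin : i + t ≤ n)
    (heven : Even (i + t)) :
    qtilTerm t n i t (t - 1) = ((n - 1 - i).choose (t - 1) : ℝ) / ((n : ℝ) + 1) ^ t := by
  obtain ⟨m, rfl⟩ : ∃ m, n = m + 1 := ⟨n - 1, by omega⟩
  obtain ⟨s, hs⟩ : ∃ s, i + t = s + 1 := ⟨i + t - 1, by omega⟩
  have hl : ell i t (t - 1) = s := by unfold ell; omega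
  have hpar : (s + 1) % 2 = 0 := hs ▸ Nat.even_iff.mp heven
  have key : ((s + 1 : ℕ) : ℝ) * ((m + 1).choose (s + 1) : ℝ) * (s.choose i : ℝ) =
      ((m + 1 : ℕ) : ℝ) * (m.choose i : ℝ) * ((m - i).choose (t - 1) : ℝ) := by
    rw [show t - 1 = s - i by omega]
    exact_mod_cast add_one_mul_choose_mul_choose m s i (by omega)
  have hC : (m.choose i : ℝ) ≠ 0 := by exact_mod_cast (Nat.choose_pos (by omega)).ne'
  simp only [qtilTerm, hl, Atil, hpar, if_true, Ahat, V, zpow_neg, zpow_natCast,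
    show s - (t - 1) = i by omega, show t - 1 - (t - 1) = 0 by omega, Nat.choose_zero_right,
    Nat.add_sub_cancel]
  push_cast at key ⊢
  field_simp
  linear_combination key

lemma tendsto_sub_mul_choose_div_pow {t : ℕ} (ht : 0 < t) (i : ℕ) (ρ : ℝ) :
    Tendsto (fun n : ℕ =>
        ((n : ℝ) - 1 - ρ) * (((n - 1 - i).choose (t - 1) : ℝ) / ((n : ℝ) + 1) ^ t))
      atTop (𝓝 (1 / ((t - 1).factorial : ℝ))) := by
  have hchoose : Tendsto (fun n : ℕ =>
      ((n - 1 - i).choose (t - 1) : ℝ) / ((n : ℝ) + 1) ^ (t - 1))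
      atTop (𝓝 (1 / ((t - 1).factorial : ℝ))) := by
    refine ((tendsto_choose_div_add_pow (t - 1) (i + 2)).comp
      (tendsto_sub_atTop_nat (i + 1))).congr' ?_
    filter_upwards [eventually_ge_atTop (i + 1)] with n hn
    simp only [Function.comp, Nat.sub_sub, Nat.cast_sub hn]
    push_cast; ring_nf
  have hratio : Tendsto (fun n : ℕ => ((n : ℝ) - 1 - ρ) / ((n : ℝ) + 1)) atTop (𝓝 1) := by
    have h : Tendsto (fun n : ℕ => (2 + ρ) / ((n : ℝ) + 1)) atTop (𝓝 0) :=
      tendsto_const_nhds.div_atTop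
        (tendsto_atTop_add_const_right _ 1 tendsto_natCast_atTop_atTop)
    have h1 : Tendsto (fun n : ℕ => 1 - (2 + ρ) / ((n : ℝ) + 1)) atTop (𝓝 1) := by
      simpa using (tendsto_const_nhds (x := (1 : ℝ))).sub h
    refine h1.congr fun n => ?_
    field_simp
    ring
  rw [← mul_one (1 / _ : ℝ)]
  refine (hchoose.mul hratio).congr fun n => ?_
  rw [← Nat.sub_add_cancel ht, pow_succ, Nat.add_sub_cancel]
  field_simp

lemma eventually_le_natCast_sub_one (c : ℝ) : ∀ᶠ n : ℕ in atTop, c ≤ (n : ℝ) - 1 := by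
  filter_upwards [tendsto_natCast_atTop_atTop.eventually_ge_atTop (c + 1)] with n hn
  linarith

lemma tendsto_binomWeight_mul_Ptil {lam : ℝ} (hlam : 0 ≤ lam) (t i : ℕ) :
    Tendsto (fun n => binomWeight n lam i * Ptil t n i) atTop
      (𝓝 (if t ≤ i then poissonWeight lam i else 0)) := by
  by_cases hti : t ≤ i
  · rw [if_pos hti]
    have hbound : Tendsto (fun n : ℕ => (t : ℝ) ^ 2 * (tailMajorant t (2 * lam) i / n)) atTop
        (𝓝 0) := by
      simpa using (tendsto_const_div_atTop_nhds_zero_nat _).const_mul ((t : ℝ) ^ 2)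
    have hS : Tendsto (fun n => binomWeight n lam i *
        ∑ δ ∈ Icc 1 t, ∑ j ∈ range δ, ptilTerm t n i δ j) atTop (𝓝 0) := by
      refine squeeze_zero' ?_ ?_ hbound <;>
      filter_upwards [eventually_ge_atTop (i + t + 2), eventually_le_natCast_sub_one lam]
        with n hn hlamn
      · exact (binomWeight_mul_sum_ptilTerm_mem_Icc (by omega) hlam hlamn hti (by omega)).1
      · exact (binomWeight_mul_sum_ptilTerm_mem_Icc (by omega) hlam hlamn hti (by omega)).2
    rw [← sub_zero (poissonWeight lam i)]
    refine ((tendsto_binomWeight lam i).sub hS).congr' ?_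
    filter_upwards [eventually_ge_atTop (i + t + 2)] with n hn
    rw [Ptil_eq_one_sub_sum hti (by omega), mul_one_sub]
  · rw [if_neg hti]
    exact tendsto_const_nhds.congr fun n => by simp [Ptil, not_le.mp hti]

lemma tendsto_sub_mul_binomWeight_mul_qtilTerm_top {t i : ℕ} {lam : ℝ} (htodd : Odd t)
    (hti : t ≤ i) (ρ : ℝ) :
    Tendsto (fun n : ℕ => ((n : ℝ) - 1 - ρ) * (binomWeight n lam i * qtilTerm t n i t (t - 1)))
      atTop (𝓝 (1 / ((t - 1).factorial : ℝ) * (if Odd i then poissonWeight lam i else 0))) := by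
  by_cases hodd : Odd i
  · rw [if_pos hodd, mul_comm]
    refine ((tendsto_binomWeight lam i).mul
      (tendsto_sub_mul_choose_div_pow htodd.pos i ρ)).congr' ?_
    filter_upwards [eventually_ge_atTop (i + t)] with n hn
    rw [qtilTerm_top htodd.pos hti hn (hodd.add_odd htodd)]
    ring
  · have hpar : (ell i t (t - 1) + 1) % 2 ≠ 0 := by
      have : ell i t (t - 1) + 1 = i + t := by have := htodd.pos; unfold ell; omega
      have := Nat.odd_iff.mp ((Nat.not_odd_iff_even.mp hodd).add_odd htodd)
      omega
    rw [if_neg hodd, mul_zero]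
    exact tendsto_const_nhds.congr fun n => by simp [qtilTerm, Atil, hpar]

lemma tendsto_sub_mul_binomWeight_mul_qtilTerm_of_add_two_le {t i δ j : ℕ} {lam ρ : ℝ}
    (hlam : 0 ≤ lam) (hρ : 0 ≤ ρ) (hj : j < δ) (hδi : δ ≤ i) (hδt : δ ≤ t) (hjt : j + 2 ≤ t) :
    Tendsto (fun n : ℕ => ((n : ℝ) - 1 - ρ) * (binomWeight n lam i * qtilTerm t n i δ j)) atTop
      (𝓝 0) := by
  have hM := tailMajorant_nonneg (by positivity : 0 ≤ 2 * lam) t i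
  have hbound : Tendsto (fun n : ℕ => ((i : ℝ) + t) * tailMajorant t (2 * lam) i * (1 / n))
      atTop (𝓝 0) := by
    simpa using (tendsto_const_div_atTop_nhds_zero_nat 1).const_mul
      (((i : ℝ) + t) * tailMajorant t (2 * lam) i)
  refine squeeze_zero' ?_ ?_ hbound <;>
  filter_upwards [eventually_ge_atTop 2, eventually_le_natCast_sub_one lam,
    eventually_le_natCast_sub_one ρ] with n hn hlamn hρn
  · exact (sub_mul_binomWeight_mul_qtilTerm_mem_Icc hn hlam hlamn hρ hρn hj hδi hδt).1
  · refine (sub_mul_binomWeight_mul_qtilTerm_mem_Icc hn hlam hlamn hρ hρn hj hδi hδt).2.trans ?_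
    have hn1 : (1 : ℝ) ≤ n := by exact_mod_cast (by omega : 1 ≤ n)
    simpa using mul_le_mul_of_nonneg_left (pow_div_add_one_pow_le hn1 (k := 1) (by omega))
      (by positivity : 0 ≤ ((i : ℝ) + t) * tailMajorant t (2 * lam) i)

lemma tendsto_sub_mul_binomWeight_mul_qtilTerm {t i δ j : ℕ} {lam ρ : ℝ} (htodd : Odd t)
    (hlam : 0 ≤ lam) (hρ : 0 ≤ ρ) (hti : t ≤ i) (hj : j < δ) (hδt : δ ≤ t) :
    Tendsto (fun n : ℕ => ((n : ℝ) - 1 - ρ) * (binomWeight n lam i * qtilTerm t n i δ j)) atTop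
      (𝓝 (if (δ, j) = (t, t - 1) then
        1 / ((t - 1).factorial : ℝ) * (if Odd i then poissonWeight lam i else 0) else 0)) := by
  by_cases hδj : (δ, j) = (t, t - 1)
  · obtain ⟨rfl, rfl⟩ := Prod.mk.inj hδj
    simpa using tendsto_sub_mul_binomWeight_mul_qtilTerm_top (lam := lam) htodd hti ρ
  · rw [if_neg hδj]
    refine tendsto_sub_mul_binomWeight_mul_qtilTerm_of_add_two_le hlam hρ hj (by omega) hδt ?_
    by_contra h
    exact hδj (by simp only [Prod.mk.injEq]; omega)

lemma tendsto_sub_mul_binomWeight_mul_Qtil {t : ℕ} {lam ρ : ℝ} (htodd : Odd t) (hlam : 0 ≤ lam)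
    (hρ : 0 ≤ ρ) (i : ℕ) :
    Tendsto (fun n : ℕ => ((n : ℝ) - 1 - ρ) * (binomWeight n lam i * Qtil t n i)) atTop
      (𝓝 (1 / ((t - 1).factorial : ℝ) *
        (if t + 1 ≤ i ∧ Odd i then poissonWeight lam i else 0))) := by
  rcases le_or_gt i (t + 1) with hi | hi
  · have hodd : ¬(t + 1 ≤ i ∧ Odd i) := by
      rintro ⟨h1, h2⟩
      obtain rfl : i = t + 1 := by omega
      exact Nat.not_odd_iff_even.mpr htodd.add_one h2
    rw [if_neg hodd, mul_zero]
    exact tendsto_const_nhds.congr fun n => by simp [Qtil, hi]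
  set c := 1 / ((t - 1).factorial : ℝ) * (if Odd i then poissonWeight lam i else 0)
  have hsum : ∑ δ ∈ Icc 1 t, ∑ j ∈ range δ, (if (δ, j) = (t, t - 1) then c else 0) = c := by
    rw [sum_Icc_sum_range_eq_single htodd.pos (fun δ _ j _ h => if_neg h), if_pos rfl]
  have h := tendsto_finsetSum (Icc 1 t) fun δ hδ => tendsto_finsetSum (range δ) fun j hj =>
    tendsto_sub_mul_binomWeight_mul_qtilTerm (ρ := ρ) (lam := lam) htodd hlam hρ (i := i)
      (by omega) (mem_range.mp hj) (mem_Icc.mp hδ).2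
  rw [hsum] at h
  simp only [c, show t + 1 ≤ i by omega, true_and] at h ⊢
  refine h.congr fun n => ?_
  rw [Qtil_eq_sum hi]
  simp only [mul_sum]

lemma tendsto_scaledSummand {t : ℕ} {lam ρ : ℝ} (htodd : Odd t) (hlam : 0 ≤ lam) (hρ : 0 ≤ ρ)
    (i : ℕ) :
    Tendsto (fun n => scaledSummand t lam ρ n i) atTop
      (𝓝 (ρ * (if t ≤ i then poissonWeight lam i else 0) + 1 / ((t - 1).factorial : ℝ) *
        (if t + 1 ≤ i ∧ Odd i then poissonWeight lam i else 0))) :=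
  (((tendsto_binomWeight_mul_Ptil hlam t i).const_mul ρ).add
    (tendsto_sub_mul_binomWeight_mul_Qtil htodd hlam hρ i)).congr fun n => by
      unfold scaledSummand; ring

lemma sub_one_mul_fDEtil_eq_tsum {t n : ℕ} (hn : 2 ≤ n) (lam ρ : ℝ) :
    ((n : ℝ) - 1) * fDEtil t n (lam / ((n : ℝ) - 1)) (ρ / ((n : ℝ) - 1)) =
      ∑' i, scaledSummand t lam ρ n i := by
  have hn1 : (n : ℝ) - 1 ≠ 0 := by
    have : (2 : ℝ) ≤ n := by exact_mod_cast hn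
    linarith
  rw [tsum_eq_sum (s := range n) fun i hi => by
    rw [mem_range, not_lt] at hi
    simp [scaledSummand, binomWeight, Nat.choose_eq_zero_of_lt (by omega : n - 1 < i)]]
  rw [fDEtil, mul_sum]
  refine sum_congr rfl fun i _ => ?_
  unfold scaledSummand binomWeight
  field_simp

lemma summable_ite_poissonWeight {lam : ℝ} (hlam : 0 ≤ lam) (p : ℕ → Prop) [DecidablePred p] :
    Summable fun i => if p i then poissonWeight lam i else 0 := by
  refine Summable.of_nonneg_of_le (fun i => ?_) (fun i => ?_)
    ((Real.summable_pow_div_factorial lam).mul_right (Real.exp (-lam)))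
  · split_ifs
    · unfold poissonWeight; positivity
    · rfl
  · split_ifs
    · rfl
    · positivity

lemma tsum_limit_eq {t : ℕ} (ht : 0 < t) {lam : ℝ} (hlam : 0 ≤ lam) (ρ : ℝ) :
    ∑' i, (ρ * (if t ≤ i then poissonWeight lam i else 0) + 1 / ((t - 1).factorial : ℝ) *
        (if t + 1 ≤ i ∧ Odd i then poissonWeight lam i else 0)) =
      ρ * phi lam (t - 1) + 1 / ((t - 1).factorial : ℝ) * chi lam t := by
  rw [Summable.tsum_add ((summable_ite_poissonWeight hlam _).mul_left _)
    ((summable_ite_poissonWeight hlam _).mul_left _), tsum_mul_left, tsum_mul_left, phi, chi,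
    Nat.sub_add_cancel ht]
  rfl

theorem stmt7_general (t : ℕ) (htodd : Odd t) (lam ρ : ℝ)
    (hlam : 0 ≤ lam) (hρ : 0 ≤ ρ) :
    Tendsto (fun n : ℕ =>
        ((n : ℝ) - 1) * fDEtil t n (lam / ((n : ℝ) - 1)) (ρ / ((n : ℝ) - 1)))
      atTop
      (nhds (ρ * phi lam (t - 1) + (1 / (Nat.factorial (t - 1) : ℝ)) * chi lam t)) := by
  have h := tendsto_tsum_of_dominated_convergence
    ((summable_tailMajorant t (4 * lam)).mul_left (ρ * (1 + t ^ 2) + t ^ 2 * (t + 1)))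
    (tendsto_scaledSummand htodd hlam hρ) (norm_scaledSummand_le hlam hρ)
  rw [tsum_limit_eq htodd.pos hlam ρ] at h
  refine h.congr' ?_
  filter_upwards [eventually_ge_atTop 2] with n hn
  exact (sub_one_mul_fDEtil_eq_tsum hn lam ρ).symm

/-- for odd `t ≥ 3`, `λ, ρ ≥ 0`,
`lim_{n→∞} (n−1)·f̃_n(λ/(n−1); ρ/(n−1)) = ρ·φ(λ;t−1) + (1/(t−1)!)·χ(λ;t)`. -/
theorem stmt7 (t : ℕ) (ht : 3 ≤ t) (htodd : Odd t) (lam ρ : ℝ)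
    (hlam : 0 ≤ lam) (hρ : 0 ≤ ρ) :
    Tendsto (fun n : ℕ =>
        ((n : ℝ) - 1) * fDEtil t n (lam / ((n : ℝ) - 1)) (ρ / ((n : ℝ) - 1)))
      atTop
      (nhds (ρ * phi lam (t - 1) + (1 / (Nat.factorial (t - 1) : ℝ)) * chi lam t)) :=
  stmt7_general t htodd lam ρ hlam hρ
end

section
/- For every integer t ≥ 2, the high-rate potential threshold of iterative hard-decision decoding with miscorrection satisfies ρ̂_t** − 1/(t−1)! ≤ ρ_t** ≤ ρ̂_t**. -/
/-!
Write `c = 1/(t-1)!`. Since the Poisson tails are nonnegative and decrease in the cutoff,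
`0 ≤ φ(z;t) ≤ φ(z;t-1)`, so the integrand of `U_m(·;ρ)` lies below that of `U(·;ρ)`
and that of `U_m(·;ρ - c)` lies above it. Hence the set of admissible `ρ` for `U_m` is
contained in the one for `U`, and shifting by `-c` maps the admissible `ρ ≥ c` for `U`
into the one for `U_m`. Both suprema are genuine: `U(1;ρ) = 1/2 - ρ ∫₀¹ φ(z;t-1) dz`
is negative for large `ρ`.
-/

open Filter

/-- Potential function of the high-rate scaling limit of density evolution for
iterative hard-decision decoding without miscorrection:
`U(λ;ρ) = ∫_0^λ (z − ρ·φ(z;t−1)) dz`. -/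
noncomputable def U (t : ℕ) (lam ρ : ℝ) : ℝ :=
  ∫ z in (0 : ℝ)..lam, (z - ρ * phi z (t - 1))

/-- Potential function of the high-rate scaling limit of density evolution for
iterative hard-decision decoding with miscorrection:
`U_m(λ;ρ) = ∫_0^λ (z − ρ·φ(z;t−1) − (1/(t−1)!)·φ(z;t)) dz`. -/
noncomputable def Um (t : ℕ) (lam ρ : ℝ) : ℝ :=
  ∫ z in (0 : ℝ)..lam,
    (z - ρ * phi z (t - 1) - (1 / (Nat.factorial (t - 1) : ℝ)) * phi z t)

/-- High-rate potential threshold without miscorrection: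
`ρ̂_t** = sup{ρ ∈ [0,∞) : U(λ;ρ) ≥ 0 for all λ ≥ 0}`. -/
noncomputable def rhoHatStarStar (t : ℕ) : ℝ :=
  sSup {ρ : ℝ | 0 ≤ ρ ∧ ∀ lam : ℝ, 0 ≤ lam → 0 ≤ U t lam ρ}

/-- High-rate potential threshold with miscorrection:
`ρ_t** = sup{ρ ∈ [0,∞) : U_m(λ;ρ) ≥ 0 for all λ ≥ 0}`. -/
noncomputable def rhoStarStar (t : ℕ) : ℝ :=
  sSup {ρ : ℝ | 0 ≤ ρ ∧ ∀ lam : ℝ, 0 ≤ lam → 0 ≤ Um t lam ρ}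

open Finset Nat

lemma hasSum_pow_div_factorial_mul_exp_neg (z : ℝ) :
    HasSum (fun i : ℕ => z ^ i / i ! * Real.exp (-z)) 1 := by
  have h := (NormedSpace.expSeries_div_hasSum_exp z).mul_right (Real.exp (-z))
  rwa [← Real.exp_eq_exp_ℝ, ← Real.exp_add, add_neg_cancel, Real.exp_zero] at h

lemma phi_eq_one_sub (z : ℝ) (k : ℕ) :
    phi z k = 1 - Real.exp (-z) * ∑ i ∈ range (k + 1), z ^ i / i ! := by
  set f : ℕ → ℝ := fun i => z ^ i / i ! * Real.exp (-z)
  have hhead : HasSum (fun i => if k + 1 ≤ i then 0 else f i) (∑ i ∈ range (k + 1), f i) := by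
    have h : HasSum (fun i => if k + 1 ≤ i then 0 else f i)
        (∑ i ∈ range (k + 1), if k + 1 ≤ i then 0 else f i) :=
      hasSum_sum_of_ne_finset_zero fun i hi => by simp_all
    rwa [sum_congr rfl fun i hi => if_neg (by simpa using hi)] at h
  have htail := ((hasSum_pow_div_factorial_mul_exp_neg z).sub hhead).congr_fun
    fun i => show (if k + 1 ≤ i then f i else 0) = _ by split_ifs <;> ring
  unfold phi
  rw [htail.tsum_eq, mul_sum]
  simp only [f, mul_comm]

lemma phi_sub_phi_succ (z : ℝ) (k : ℕ) :
    phi z k - phi z (k + 1) = z ^ (k + 1) / (k + 1)! * Real.exp (-z) := by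
  rw [phi_eq_one_sub, phi_eq_one_sub, sum_range_succ _ (k + 1)]
  ring

lemma phi_nonneg {z : ℝ} (hz : 0 ≤ z) (k : ℕ) : 0 ≤ phi z k :=
  tsum_nonneg fun i => by split_ifs <;> positivity

lemma phi_antitone {z : ℝ} (hz : 0 ≤ z) : Antitone (phi z) :=
  antitone_nat_of_succ_le fun k => by
    have hterm : 0 ≤ z ^ (k + 1) / (k + 1)! * Real.exp (-z) := by positivity
    linarith [phi_sub_phi_succ z k]

lemma pow_div_factorial_mul_exp_neg_le_phi {z : ℝ} (hz : 0 ≤ z) (k : ℕ) :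
    z ^ (k + 1) / (k + 1)! * Real.exp (-z) ≤ phi z k := by
  linarith [phi_sub_phi_succ z k, phi_nonneg hz (k + 1)]

lemma phi_le_self {z : ℝ} (hz : 0 ≤ z) (k : ℕ) : phi z k ≤ z :=
  calc phi z k ≤ phi z 0 := phi_antitone hz k.zero_le
    _ = 1 - Real.exp (-z) := by simp [phi_eq_one_sub]
    _ ≤ z := by linarith [Real.add_one_le_exp (-z)]

@[fun_prop]
lemma continuous_phi (k : ℕ) : Continuous (phi · k) := by
  simp_rw [phi_eq_one_sub]
  fun_prop

lemma U_eq_sub (t : ℕ) (lam ρ : ℝ) :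
    U t lam ρ = lam ^ 2 / 2 - ρ * ∫ z in (0 : ℝ)..lam, phi z (t - 1) := by
  rw [U, intervalIntegral.integral_sub (continuous_id'.intervalIntegrable _ _)
    (((continuous_phi _).const_mul ρ).intervalIntegrable _ _), intervalIntegral.integral_const_mul,
    integral_id]
  ring

lemma exp_neg_one_div_le_integral_phi (k : ℕ) :
    Real.exp (-1) / ((k + 1)! * (k + 2)) ≤ ∫ z in (0 : ℝ)..1, phi z k :=
  calc Real.exp (-1) / ((k + 1)! * (k + 2))
      = ∫ z in (0 : ℝ)..1, z ^ (k + 1) / (k + 1)! * Real.exp (-1) := by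
        simp only [intervalIntegral.integral_mul_const, intervalIntegral.integral_div, integral_pow]
        push_cast
        field_simp
        ring
    _ ≤ ∫ z in (0 : ℝ)..1, phi z k := by
        refine intervalIntegral.integral_mono_on zero_le_one
          ((by fun_prop : Continuous _).intervalIntegrable _ _)
          ((continuous_phi k).intervalIntegrable _ _) fun z ⟨hz0, hz1⟩ => ?_
        refine le_trans ?_ (pow_div_factorial_mul_exp_neg_le_phi hz0 k)
        gcongr

lemma one_div_factorial_le_one (n : ℕ) : 1 / (n ! : ℝ) ≤ 1 :=
  div_le_one_of_le₀ (mod_cast n.factorial_pos) (by positivity)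

section Potentials

variable (t : ℕ) {lam : ℝ}

lemma Um_le_U (hlam : 0 ≤ lam) (ρ : ℝ) : Um t lam ρ ≤ U t lam ρ :=
  intervalIntegral.integral_mono_on hlam
    ((by fun_prop : Continuous _).intervalIntegrable _ _)
    ((by fun_prop : Continuous _).intervalIntegrable _ _) fun z hz =>
      sub_le_self _ (mul_nonneg (by positivity) (phi_nonneg hz.1 t))

lemma U_le_Um_sub (hlam : 0 ≤ lam) (ρ : ℝ) :
    U t lam ρ ≤ Um t lam (ρ - 1 / ((t - 1)! : ℝ)) :=
  intervalIntegral.integral_mono_on hlam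
    ((by fun_prop : Continuous _).intervalIntegrable _ _)
    ((by fun_prop : Continuous _).intervalIntegrable _ _) fun z hz => by
      have hmono : phi z t ≤ phi z (t - 1) := phi_antitone hz.1 (t.sub_le 1)
      have hc : 0 ≤ 1 / ((t - 1)! : ℝ) := by positivity
      nlinarith [mul_le_mul_of_nonneg_left hmono hc]

lemma Um_zero_nonneg (hlam : 0 ≤ lam) : 0 ≤ Um t lam 0 :=
  intervalIntegral.integral_nonneg hlam fun z hz => by
    have hc : 1 / ((t - 1)! : ℝ) * phi z t ≤ z :=
      (mul_le_of_le_one_left (phi_nonneg hz.1 t) (one_div_factorial_le_one _)).trans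
        (phi_le_self hz.1 t)
    linarith

end Potentials

def admissibleU (t : ℕ) : Set ℝ := {ρ | 0 ≤ ρ ∧ ∀ lam : ℝ, 0 ≤ lam → 0 ≤ U t lam ρ}

def admissibleUm (t : ℕ) : Set ℝ := {ρ | 0 ≤ ρ ∧ ∀ lam : ℝ, 0 ≤ lam → 0 ≤ Um t lam ρ}

section Admissible

variable (t : ℕ)

lemma admissibleUm_subset_admissibleU : admissibleUm t ⊆ admissibleU t :=
  fun _ ⟨hρ, hUm⟩ => ⟨hρ, fun lam hlam => (hUm lam hlam).trans (Um_le_U t hlam _)⟩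

lemma zero_mem_admissibleUm : (0 : ℝ) ∈ admissibleUm t :=
  ⟨le_rfl, fun _ hlam => Um_zero_nonneg t hlam⟩

lemma sub_mem_admissibleUm {ρ : ℝ} (hρ : ρ ∈ admissibleU t)
    (hle : 1 / ((t - 1)! : ℝ) ≤ ρ) :
    ρ - 1 / ((t - 1)! : ℝ) ∈ admissibleUm t :=
  ⟨sub_nonneg.2 hle, fun lam hlam => (hρ.2 lam hlam).trans (U_le_Um_sub t hlam ρ)⟩

lemma bddAbove_admissibleU : BddAbove (admissibleU t) := by
  obtain ⟨K, hK, hK_le⟩ : ∃ K > 0, K ≤ ∫ z in (0 : ℝ)..1, phi z (t - 1) :=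
    ⟨_, by positivity, exp_neg_one_div_le_integral_phi (t - 1)⟩
  refine ⟨1 / (2 * K), fun ρ ⟨hρ, hU⟩ => ?_⟩
  have hU_one := hU 1 zero_le_one
  rw [U_eq_sub] at hU_one
  rw [le_div_iff₀ (by positivity)]
  nlinarith [mul_le_mul_of_nonneg_left hK_le hρ]

end Admissible

theorem stmt10_general (t : ℕ) :
    rhoHatStarStar t - 1 / (Nat.factorial (t - 1) : ℝ) ≤ rhoStarStar t ∧
      rhoStarStar t ≤ rhoHatStarStar t := by
  change sSup (admissibleU t) - _ ≤ sSup (admissibleUm t) ∧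
    sSup (admissibleUm t) ≤ sSup (admissibleU t)
  have hsub := admissibleUm_subset_admissibleU t
  have hbdd := bddAbove_admissibleU t
  have hbddm := hbdd.mono hsub
  refine ⟨?_, csSup_le_csSup hbdd ⟨0, zero_mem_admissibleUm t⟩ hsub⟩
  rw [sub_le_iff_le_add]
  refine csSup_le ⟨0, hsub (zero_mem_admissibleUm t)⟩ fun ρ hρ => ?_
  rcases le_total ρ (1 / ((t - 1)! : ℝ)) with hle | hge
  · linarith [le_csSup hbddm (zero_mem_admissibleUm t)]
  · linarith [le_csSup hbddm (sub_mem_admissibleUm t hρ hge)]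

/-- for every integer `t ≥ 2`,
`ρ̂_t** − 1/(t−1)! ≤ ρ_t** ≤ ρ̂_t**`. -/
theorem stmt10 (t : ℕ) (ht : 2 ≤ t) :
    rhoHatStarStar t - 1 / (Nat.factorial (t - 1) : ℝ) ≤ rhoStarStar t ∧
      rhoStarStar t ≤ rhoHatStarStar t :=
  stmt10_general t
end
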